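/- arXiv:1808.09070 — 3 statements merged into one kernel-verified Lean document; each statement's English description precedes it below -/
import Mathlib

section
/- Let $\mathfrak{a}_1, \ldots, \mathfrak{a}_m$ be nonzero ideals in a commutative Noetherian ring $A$, and for each $p \ge 1$ set $\mathfrak{b}_p := \sum_{b} \mathfrak{a}_1^{b_1} \cdots \mathfrak{a}_m^{b_m}$, the sum over tuples $b \in \mathbb{N}^m$ with $\sum_{i=1}^m i\, b_i = p$. Then there exists a positive integer $N$ such that $\mathfrak{b}_{Np} = \mathfrak{b}_N^p$ for all positive integers $p$. -/
/-!
Think of `∏ i, a i ^ b i` as the image of the monomial `X^b` of `k[X₁, …, Xₘ]`, graded by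
`deg Xᵢ = i`; then `𝔟_p` is the image of the degree-`p` monomials. Multiplying monomials gives
`𝔟_p 𝔟_q ⊆ 𝔟_{p+q}`, hence `𝔟_N ^ p ⊆ 𝔟_{Np}`. Conversely every weight `i ≤ m` divides `m!`, so a
monomial of degree `> m · m!` is divisible by a pure power `Xᵢ^{m!/i}` of degree exactly `m!`.
Peeling off `m + 1` of these shows that for `N = (m + 1) · m!` every monomial of degree
`N (p + 1)` is a product of monomials of degrees `N` and `N p`, so `𝔟_{N(p+1)} ⊆ 𝔟_N 𝔟_{Np}`.
-/

/-- The sequence of ideals `𝔟_p = ∑_{∑ i bᵢ = p} 𝔞₁^{b₁} ⋯ 𝔞ₘ^{bₘ}`. -/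
def bSeq {A : Type*} [CommRing A] {m : ℕ} (a : Fin m → Ideal A) (p : ℕ) : Ideal A :=
  ⨆ b ∈ {b : Fin m → ℕ | ∑ i : Fin m, ((i : ℕ) + 1) * b i = p}, ∏ i : Fin m, a i ^ b i

open Nat

def weightedDeg {ι : Type*} [Fintype ι] (w b : ι → ℕ) : ℕ := ∑ i, w i * b i

section WeightedDeg

variable {ι : Type*} [Fintype ι] (w : ι → ℕ)

lemma weightedDeg_add (b c : ι → ℕ) :
    weightedDeg w (b + c) = weightedDeg w b + weightedDeg w c := by
  simp only [weightedDeg, Pi.add_apply, mul_add, Finset.sum_add_distrib]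

lemma weightedDeg_single [DecidableEq ι] (i : ι) (t : ℕ) :
    weightedDeg w (Pi.single i t) = w i * t := by
  simp [weightedDeg, Pi.single_apply]

lemma exists_lt_mul_of_card_mul_lt_weightedDeg {L : ℕ} {b : ι → ℕ}
    (h : Fintype.card ι * L < weightedDeg w b) : ∃ i, L < w i * b i := by
  obtain ⟨i, -, hi⟩ := Finset.exists_lt_of_sum_lt (s := Finset.univ) (f := fun _ => L)
    (g := fun i => w i * b i) (by rwa [Finset.sum_const, Finset.card_univ, smul_eq_mul])
  exact ⟨i, hi⟩

lemma exists_le_weightedDeg_eq_mul {L : ℕ} (hL : 0 < L) (hw : ∀ i, w i ∣ L) (k : ℕ)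
    {b : ι → ℕ} (hb : Fintype.card ι * L + k * L ≤ weightedDeg w b) :
    ∃ c ≤ b, weightedDeg w c = k * L := by
  classical
  induction k generalizing b with
  | zero => exact ⟨0, fun _ => Nat.zero_le _, by simp [weightedDeg]⟩
  | succ k ih =>
    obtain ⟨i, hi⟩ := exists_lt_mul_of_card_mul_lt_weightedDeg w (L := L) (b := b)
      (by nlinarith)
    have hwi : 0 < w i := Nat.pos_of_dvd_of_pos (hw i) hL
    set s : ι → ℕ := Pi.single i (L / w i)
    have hs : weightedDeg w s = L := by rw [weightedDeg_single, Nat.mul_div_cancel' (hw i)]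
    have hsb : s ≤ b := by
      intro j
      rcases eq_or_ne j i with rfl | hji
      · refine Nat.le_of_mul_le_mul_left ?_ hwi
        rw [show s j = L / w j from Pi.single_eq_same _ _, Nat.mul_div_cancel' (hw j)]
        exact hi.le
      · simp [s, hji]
    have hdeg : weightedDeg w (b - s) + L = weightedDeg w b := by
      rw [← hs, ← weightedDeg_add, tsub_add_cancel_of_le hsb]
    obtain ⟨c, hcb, hc⟩ := ih (b := b - s) (by nlinarith)
    refine ⟨c + s, ?_, by rw [weightedDeg_add, hc, hs, Nat.succ_mul]⟩
    calc c + s ≤ b - s + s := add_le_add_left hcb s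
      _ = b := tsub_add_cancel_of_le hsb

end WeightedDeg

section Ideals

variable {A : Type*} [CommRing A] {m : ℕ} (a : Fin m → Ideal A)

local notation "deg" => weightedDeg (fun i : Fin m => (i : ℕ) + 1)

lemma bSeq_le_iff {p : ℕ} {I : Ideal A} :
    bSeq a p ≤ I ↔ ∀ b, deg b = p → ∏ i, a i ^ b i ≤ I :=
  iSup₂_le_iff

lemma prod_pow_le_bSeq {p : ℕ} {b : Fin m → ℕ} (hb : deg b = p) :
    ∏ i, a i ^ b i ≤ bSeq a p :=
  (bSeq_le_iff a).mp le_rfl b hb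

lemma prod_pow_add (b c : Fin m → ℕ) :
    ∏ i, a i ^ (b + c) i = (∏ i, a i ^ b i) * ∏ i, a i ^ c i := by
  simp only [Pi.add_apply, pow_add, Finset.prod_mul_distrib]

lemma bSeq_mul_bSeq_le (p q : ℕ) : bSeq a p * bSeq a q ≤ bSeq a (p + q) := by
  simp only [bSeq, Ideal.iSup_mul, Ideal.mul_iSup, iSup_le_iff]
  intro c hc b hb
  rw [← prod_pow_add]
  exact prod_pow_le_bSeq a (by rw [weightedDeg_add]; exact congrArg₂ (· + ·) hb hc)

lemma bSeq_add_le_mul {p q : ℕ} (hsplit : ∀ b, deg b = p + q → ∃ c ≤ b, deg c = p) :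
    bSeq a (p + q) ≤ bSeq a p * bSeq a q := by
  refine (bSeq_le_iff a).mpr fun b hb => ?_
  obtain ⟨c, hcb, hc⟩ := hsplit b hb
  have hbc : deg (b - c) = q := by
    rw [← tsub_add_cancel_of_le hcb, weightedDeg_add, hc] at hb
    omega
  rw [← tsub_add_cancel_of_le hcb, add_comm, prod_pow_add]
  exact Ideal.mul_mono (prod_pow_le_bSeq a hc) (prod_pow_le_bSeq a hbc)

lemma bSeq_pow_le (N p : ℕ) : bSeq a N ^ p ≤ bSeq a (N * p) := by
  induction p with
  | zero =>
    rw [pow_zero, mul_zero]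
    simpa only [Pi.zero_apply, pow_zero, Finset.prod_const_one] using
      prod_pow_le_bSeq a (p := 0) (b := 0) (by simp [weightedDeg])
  | succ p ih =>
    calc bSeq a N ^ (p + 1) = bSeq a N ^ p * bSeq a N := pow_succ _ _
      _ ≤ bSeq a (N * p) * bSeq a N := Ideal.mul_mono_left ih
      _ ≤ bSeq a (N * (p + 1)) := by rw [Nat.mul_add_one]; exact bSeq_mul_bSeq_le a _ _

lemma bSeq_mul_le_pow {p : ℕ} (hp : 0 < p) :
    bSeq a ((m + 1) * m ! * p) ≤ bSeq a ((m + 1) * m !) ^ p := by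
  induction p, hp using Nat.le_induction with
  | base => simp
  | succ p hp ih =>
    have hsplit : ∀ b, deg b = (m + 1) * m ! + (m + 1) * m ! * p →
        ∃ c ≤ b, deg c = (m + 1) * m ! := by
      refine fun b hb => exists_le_weightedDeg_eq_mul _ m.factorial_pos
        (fun i => Nat.dvd_factorial i.succ_pos i.isLt) (m + 1) ?_
      rw [Fintype.card_fin, hb]
      nlinarith
    calc bSeq a ((m + 1) * m ! * (p + 1))
        = bSeq a ((m + 1) * m ! + (m + 1) * m ! * p) := by ring_nf
      _ ≤ bSeq a ((m + 1) * m !) * bSeq a ((m + 1) * m !) ^ p :=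
          (bSeq_add_le_mul a hsplit).trans (Ideal.mul_mono_right ih)
      _ = bSeq a ((m + 1) * m !) ^ (p + 1) := (pow_succ' _ _).symm

end Ideals

theorem stmt2_general {A : Type*} [CommRing A] {m : ℕ}
    (a : Fin m → Ideal A) :
    ∃ N : ℕ, 0 < N ∧ ∀ p : ℕ, 0 < p → bSeq a (N * p) = bSeq a N ^ p :=
  ⟨(m + 1) * m !, by positivity, fun p hp =>
    (bSeq_mul_le_pow a hp).antisymm (bSeq_pow_le a _ p)⟩

/-- In a Noetherian ring, there exists `N > 0` with `𝔟_{Np} = 𝔟_N ^ p` for all `p > 0`. -/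
theorem stmt2 {A : Type*} [CommRing A] [IsNoetherianRing A] {m : ℕ}
    (a : Fin m → Ideal A) (ha : ∀ i, a i ≠ ⊥) :
    ∃ N : ℕ, 0 < N ∧ ∀ p : ℕ, 0 < p → bSeq a (N * p) = bSeq a N ^ p :=
  stmt2_general a
end

section
/- Let $A \to B$ be a flat morphism of Noetherian commutative rings, let $I \subseteq B$ be an ideal, and let $M$ be an $A$-module. If the associated graded ring $\mathrm{gr}_I B = \bigoplus_{m \ge 0} I^m/I^{m+1}$ is flat over $A$, then for each $m \ge 0$: (1) $I^m$, viewed as a $B$-module (hence as an $A$-module), is flat over $A$; and (2) the natural map $I^m \otimes_A M \to B \otimes_A M$ is injective. -/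
/-!
In a short exact sequence `0 → N' → N → Q → 0` with `Q` flat, tensoring preserves injectivity of
`N' → N`, and `N'` is flat as soon as `N` is. Apply this to `0 → Iᵐ⁺¹ → Iᵐ → Iᵐ/Iᵐ⁺¹ → 0` and
induct on `m`, starting from `I⁰ = B`, which is flat over `A`.
-/

open LinearMap

namespace Module.Flat

variable {R : Type*} [CommRing R] {M N P : Type*} [AddCommGroup M] [AddCommGroup N]
  [AddCommGroup P] [Module R M] [Module R N] [Module R P]

lemma of_injective_of_exact [Flat R N] [Flat R P] (f : M →ₗ[R] N) (g : N →ₗ[R] P)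
    (hf : Function.Injective f) (hg : Function.Surjective g) (hfg : Function.Exact f g) :
    Flat R M := by
  rw [iff_rTensor_injective']
  intro J
  have hJ : Function.Injective (f.lTensor R ∘ₗ J.subtype.rTensor M) := by
    rw [lTensor_comp_rTensor, ← rTensor_comp_lTensor]
    exact (rTensor_preserves_injective_linearMap _ J.injective_subtype).comp
      (lTensor_injective_of_exact_of_flat g hg f hf hfg J)
  rw [coe_comp] at hJ
  exact hJ.of_comp

end Module.Flat

namespace Submodule

variable {R X : Type*} [CommRing R] [AddCommGroup X] [Module R X] {N' N : Submodule R X}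

lemma exact_inclusion_mkQ (h : N' ≤ N) :
    Function.Exact (inclusion h) (N'.comap N.subtype).mkQ := by
  rw [LinearMap.exact_iff, ker_mkQ, range_inclusion]

variable [Module.Flat R (N ⧸ N'.comap N.subtype)]

lemma flat_of_le_of_flat_quotient [Module.Flat R N] (h : N' ≤ N) : Module.Flat R N' :=
  Module.Flat.of_injective_of_exact _ _ (inclusion_injective h) (mkQ_surjective _)
    (exact_inclusion_mkQ h)

lemma rTensor_subtype_injective_of_le_of_flat_quotient (h : N' ≤ N) (M : Type*)
    [AddCommGroup M] [Module R M] (hN : Function.Injective (N.subtype.rTensor M)) :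
    Function.Injective (N'.subtype.rTensor M) := by
  rw [← N'.subtype_comp_inclusion N h, rTensor_comp]
  refine hN.comp ?_
  rw [← lTensor_inj_iff_rTensor_inj]
  exact lTensor_injective_of_exact_of_flat _ (mkQ_surjective _) _ (inclusion_injective h)
    (exact_inclusion_mkQ h) M

end Submodule

theorem stmt3_general (A B : Type*) [CommRing A] [CommRing B]
    [Algebra A B] [Module.Flat A B] (I : Ideal B)
    (M : Type*) [AddCommGroup M] [Module A M]
    (hgr : ∀ m : ℕ, Module.Flat A
      (↥((I ^ m).restrictScalars A) ⧸
        (((I ^ (m + 1)).restrictScalars A).comap ((I ^ m).restrictScalars A).subtype))) :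
    ∀ m : ℕ, Module.Flat A ↥((I ^ m).restrictScalars A) ∧
      Function.Injective (LinearMap.rTensor M ((I ^ m).restrictScalars A).subtype) := by
  intro m
  induction m with
  | zero =>
    rw [pow_zero, Ideal.one_eq_top, Submodule.restrictScalars_top]
    exact ⟨.of_linearEquiv Submodule.topEquiv, (Submodule.topEquiv.rTensor M).injective⟩
  | succ m ih =>
    have hle : (I ^ (m + 1)).restrictScalars A ≤ (I ^ m).restrictScalars A :=
      Ideal.pow_le_pow_right m.le_succ
    have := hgr m
    obtain ⟨_, hinj⟩ := ih
    exact ⟨Submodule.flat_of_le_of_flat_quotient hle,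
      Submodule.rTensor_subtype_injective_of_le_of_flat_quotient hle M hinj⟩

/-- If `A → B` is flat between Noetherian rings, `I ⊆ B` an ideal with `gr_I B`
flat over `A` (i.e. each `Iᵐ/Iᵐ⁺¹` is `A`-flat), then each `Iᵐ` is `A`-flat and
`Iᵐ ⊗_A M → B ⊗_A M` is injective for any `A`-module `M`. -/
theorem stmt3 (A B : Type*) [CommRing A] [CommRing B]
    [IsNoetherianRing A] [IsNoetherianRing B]
    [Algebra A B] [Module.Flat A B] (I : Ideal B)
    (M : Type*) [AddCommGroup M] [Module A M]
    (hgr : ∀ m : ℕ, Module.Flat A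
      (↥((I ^ m).restrictScalars A) ⧸
        (((I ^ (m + 1)).restrictScalars A).comap ((I ^ m).restrictScalars A).subtype))) :
    ∀ m : ℕ, Module.Flat A ↥((I ^ m).restrictScalars A) ∧
      Function.Injective (LinearMap.rTensor M ((I ^ m).restrictScalars A).subtype) :=
  stmt3_general A B I M hgr
end

section
/- Let $P \subset \mathbb{R}^n$ be a compact convex polytope with nonempty interior containing the origin in its interior, defined by finitely many inequalities $\langle u, v_i \rangle \ge -c_i$ with $c_i > 0$ ($1 \le i \le d$, $v_i \ne 0$), and let $\overline{u}$ be a point in the interior of $P$ with $\overline{u} \ne 0$. Let $c$ be the largest real number such that $-c\overline{u} \in P$. Then $c > 0$, and the quantity $\min_{1 \le i \le d} \frac{c_i}{c_i + \langle \overline{u}, v_i \rangle}$ equals $\frac{c}{1+c}$, provided every facet inequality is attained, i.e. for each $i$ there is a point of $P$ with $\langle u, v_i\rangle = -c_i$. In particular this minimum lies in $(0,1)$. -/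
/-! The condition `-(C • ū) ∈ P` reads `C ⟨ū, vᵢ⟩ ≤ cᵢ` for all `i`, and the maximality of `C`
forces equality for some `i`: otherwise the finitely many strict inequalities would survive a small
increase of `C`. Since `0` and `ū` are interior points, `C > 0` and `cᵢ + ⟨ū, vᵢ⟩ > 0`, and then
`C ⟨ū, vᵢ⟩ ≤ cᵢ` is equivalent to `C / (1 + C) ≤ cᵢ / (cᵢ + ⟨ū, vᵢ⟩)`, with equality exactly
where the constraint is tight. -/

open Filter Topology
open scoped RealInnerProductSpace

theorem exists_pos_add_smul_mem_of_mem_interior {E : Type*} [AddCommGroup E] [Module ℝ E]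
    [TopologicalSpace E] [ContinuousAdd E] [ContinuousSMul ℝ E] {s : Set E} {x : E}
    (hx : x ∈ interior s) (y : E) : ∃ t : ℝ, 0 < t ∧ x + t • y ∈ s := by
  have hcont : Continuous fun t : ℝ => x + t • y := by fun_prop
  have hnhds : ∀ᶠ t in 𝓝 (0 : ℝ), x + t • y ∈ s :=
    hcont.tendsto' 0 x (by simp) |>.eventually (mem_interior_iff_mem_nhds.mp hx)
  exact ((frequently_gt_nhds 0).and_eventually hnhds).exists

/-- Scaling `x` up slightly keeps it in the polyhedron, which rules out `⟪x, vᵢ⟫ = -cᵢ < 0`. -/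
theorem neg_lt_inner_of_mem_interior {E ι : Type*} [NormedAddCommGroup E]
    [InnerProductSpace ℝ E] {v : ι → E} {c : ι → ℝ} (hc : ∀ i, 0 < c i) {x : E}
    (hx : x ∈ interior {u | ∀ i, -c i ≤ ⟪u, v i⟫}) (i : ι) : -c i < ⟪x, v i⟫ := by
  obtain ⟨t, ht, hxt⟩ := exists_pos_add_smul_mem_of_mem_interior hx x
  have hle : -c i ≤ ⟪x, v i⟫ + t * ⟪x, v i⟫ := by
    simpa only [inner_add_left, real_inner_smul_left] using hxt i
  rcases lt_or_ge ⟪x, v i⟫ 0 with hneg | hnonneg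
  · nlinarith
  · linarith [hc i]

theorem exists_mul_eq_of_isGreatest {ι : Type*} [Finite ι] {a c : ι → ℝ} {C : ℝ}
    (hC : IsGreatest {t | ∀ i, t * a i ≤ c i} C) : ∃ i, C * a i = c i := by
  by_contra! hne
  have hlt : C ∈ {t : ℝ | ∀ i, t * a i < c i} := fun i => (hC.1 i).lt_of_ne (hne i)
  have hopen : IsOpen {t : ℝ | ∀ i, t * a i < c i} := by
    simpa only [Set.ofPred_forall] using
      isOpen_iInter_of_finite fun i => isOpen_lt (by fun_prop) continuous_const
  obtain ⟨t, hCt, ht⟩ := ((frequently_gt_nhds C).and_eventually (hopen.mem_nhds hlt)).exists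
  exact (hCt.trans_le (hC.2 fun i => (ht i).le)).false

theorem inf'_div_add_eq_div_one_add {ι : Type*} [Fintype ι]
    (H : (Finset.univ : Finset ι).Nonempty) {a c : ι → ℝ} {C : ℝ} (hC : 0 ≤ C)
    (hden : ∀ i, 0 < c i + a i)
    (hle : ∀ i, C * a i ≤ c i) {i₀ : ι} (heq : C * a i₀ = c i₀) :
    Finset.univ.inf' H (fun i => c i / (c i + a i)) = C / (1 + C) := by
  have h1C : 0 < 1 + C := by linarith
  refine le_antisymm ?_ (Finset.le_inf' _ _ fun i _ => ?_)
  · have hden₀ : C * a i₀ + a i₀ ≠ 0 := heq ▸ (hden i₀).ne'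
    calc Finset.univ.inf' H (fun i => c i / (c i + a i))
        _ ≤ c i₀ / (c i₀ + a i₀) := Finset.inf'_le _ (Finset.mem_univ i₀)
        _ = C / (1 + C) := by
          rw [← heq, div_eq_div_iff hden₀ h1C.ne']
          ring
  · rw [div_le_div_iff₀ h1C (hden i)]
    nlinarith [hle i]

theorem stmt10_general (n d : ℕ) (hd : 0 < d)
    (v : Fin d → EuclideanSpace ℝ (Fin n))
    (c : Fin d → ℝ) (hc : ∀ i, 0 < c i)
    (P : Set (EuclideanSpace ℝ (Fin n)))
    (hP : P = {u | ∀ i, -(c i) ≤ (inner ℝ u (v i) : ℝ)})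
    (h0 : (0 : EuclideanSpace ℝ (Fin n)) ∈ interior P)
    (u₀ : EuclideanSpace ℝ (Fin n)) (hu₀ : u₀ ∈ interior P)
    (C : ℝ) (hC : IsGreatest {t : ℝ | -(t • u₀) ∈ P} C) :
    0 < C ∧
    Finset.univ.inf' ⟨⟨0, hd⟩, Finset.mem_univ _⟩
      (fun i => c i / (c i + (inner ℝ u₀ (v i) : ℝ))) = C / (1 + C) ∧
    0 < C / (1 + C) ∧ C / (1 + C) < 1 := by
  have hray : {t : ℝ | -(t • u₀) ∈ P} = {t | ∀ i, t * ⟪u₀, v i⟫ ≤ c i} := by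
    ext t
    simp only [hP, Set.mem_ofPred_eq, inner_neg_left, real_inner_smul_left, neg_le_neg_iff]
  have hCpos : 0 < C := by
    obtain ⟨t, ht, hmem⟩ := exists_pos_add_smul_mem_of_mem_interior h0 (-u₀)
    exact ht.trans_le (hC.2 (by simpa using hmem))
  rw [hray] at hC
  obtain ⟨i₀, hi₀⟩ := exists_mul_eq_of_isGreatest hC
  have hden : ∀ i, 0 < c i + ⟪u₀, v i⟫ := fun i => by
    linarith [neg_lt_inner_of_mem_interior hc (hP ▸ hu₀) i]
  have h1C : 0 < 1 + C := by linarith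
  exact ⟨hCpos, inf'_div_add_eq_div_one_add _ hCpos.le hden hC.1 hi₀, div_pos hCpos h1C,
    (div_lt_one h1C).mpr (by linarith)⟩

/-- Toric computation of the stability threshold: for a compact polytope
`P = {u | ⟨u, vᵢ⟩ ≥ -cᵢ}` with `0` in its interior, an interior point `ū ≠ 0`,
and `c` the largest real with `-cū ∈ P`, if every facet inequality is attained
then `minᵢ cᵢ/(cᵢ + ⟨ū, vᵢ⟩) = c/(1+c) ∈ (0,1)`. -/
theorem stmt10 (n d : ℕ) (hd : 0 < d)
    (v : Fin d → EuclideanSpace ℝ (Fin n)) (hv : ∀ i, v i ≠ 0)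
    (c : Fin d → ℝ) (hc : ∀ i, 0 < c i)
    (P : Set (EuclideanSpace ℝ (Fin n)))
    (hP : P = {u | ∀ i, -(c i) ≤ (inner ℝ u (v i) : ℝ)})
    (hcomp : IsCompact P)
    (h0 : (0 : EuclideanSpace ℝ (Fin n)) ∈ interior P)
    (u₀ : EuclideanSpace ℝ (Fin n)) (hu₀ : u₀ ∈ interior P) (hu₀ne : u₀ ≠ 0)
    (C : ℝ) (hC : IsGreatest {t : ℝ | -(t • u₀) ∈ P} C)
    (hfacet : ∀ i, ∃ u ∈ P, (inner ℝ u (v i) : ℝ) = -(c i)) :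
    0 < C ∧
    Finset.univ.inf' ⟨⟨0, hd⟩, Finset.mem_univ _⟩
      (fun i => c i / (c i + (inner ℝ u₀ (v i) : ℝ))) = C / (1 + C) ∧
    0 < C / (1 + C) ∧ C / (1 + C) < 1 :=
  stmt10_general n d hd v c hc P hP h0 u₀ hu₀ C hC
end
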